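/- arXiv:1203.4623 — 4 statements merged into one kernel-verified Lean document; each statement's English description precedes it below -/
import Mathlib

section
/- Let f be C¹ on [0,∞) with f(0) = 0, f'(0) = 0, and lim_{u→0} f(u)/u^p = −k for some p > 1 and k > 0. Let V(u) = −∫₀ᵘ f(s) ds, and let v be a positive symmetric decreasing solution of v'' + f(v) = 0 with v(±∞) = 0, determined implicitly by |x| = ∫_{v(x)}^{θ*} du/√(2V(u)). Then there exist constants C₁, C₂ > 0 such that C₁ |x|^{−2/(p−1)} ≤ v(x) ≤ C₂ |x|^{−2/(p−1)} for all sufficiently large |x|. -/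
/-!
Near `0` the hypothesis `f u ~ -k u ^ p` squeezes `-f u` between multiples of `u ^ p`, hence
`V u` between multiples of `u ^ (p + 1)` and the integrand `1 / √(2 V u)` between multiples of
`u ^ (-(q + 1))`, where `q = (p - 1) / 2`. Fixing a reference point `x₀`, the implicit relation
gives `|x| - |x₀| = ∫ u in v x..v x₀, 1 / √(2 V u)`, which is therefore comparable to
`v x ^ (-q)`. So `v x ^ (-q) ≍ |x|` for large `|x|`, i.e. `v x ≍ |x| ^ (-1 / q)`.
-/

open Set Filter Topology MeasureTheory

lemma exists_forall_le_abs_of_eventually {P : ℝ → Prop}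
    (h : ∀ᶠ x in comap (fun x : ℝ => |x|) atTop, P x) : ∃ R, 0 < R ∧ ∀ x, R ≤ |x| → P x := by
  obtain ⟨R, hR⟩ := eventually_atTop.1 (eventually_comap.1 h)
  exact ⟨max R 1, by positivity, fun x hx => hR |x| (le_of_max_le_left hx) x rfl⟩

lemma eventually_mul_rpow_lt_of_tendsto_div_rpow {g : ℝ → ℝ} {p L a b : ℝ}
    (hg : Tendsto (fun u => g u / u ^ p) (𝓝[>] 0) (𝓝 L)) (ha : a < L) (hb : L < b) :
    ∀ᶠ u in 𝓝[>] 0, a * u ^ p < g u ∧ g u < b * u ^ p := by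
  filter_upwards [hg (Ioo_mem_nhds ha hb), self_mem_nhdsWithin] with u hu hu0
  have hup : 0 < u ^ p := Real.rpow_pos_of_pos hu0 p
  exact ⟨(lt_div_iff₀ hup).1 hu.1, (div_lt_iff₀ hup).1 hu.2⟩

lemma integral_mem_Icc_of_mul_rpow_le {g : ℝ → ℝ} {r a b w t : ℝ} (hwt : w ≤ t)
    (hr : -1 < r ∨ r ≠ -1 ∧ (0 : ℝ) ∉ uIcc w t) (hg : IntervalIntegrable g volume w t)
    (hbd : ∀ s ∈ Ioo w t, a * s ^ r ≤ g s ∧ g s ≤ b * s ^ r) :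
    ∫ s in w..t, g s ∈ Icc (a * ((t ^ (r + 1) - w ^ (r + 1)) / (r + 1)))
      (b * ((t ^ (r + 1) - w ^ (r + 1)) / (r + 1))) := by
  have hrpow : IntervalIntegrable (fun s : ℝ => s ^ r) volume w t := by
    rcases hr with hr | ⟨-, h0⟩
    · exact intervalIntegral.intervalIntegrable_rpow' hr
    · exact intervalIntegral.intervalIntegrable_rpow (Or.inr h0)
  rw [← integral_rpow hr, ← intervalIntegral.integral_const_mul,
    ← intervalIntegral.integral_const_mul]
  exact ⟨intervalIntegral.integral_mono_on_of_le_Ioo hwt (hrpow.const_mul a) hg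
      fun s hs => (hbd s hs).1,
    intervalIntegral.integral_mono_on_of_le_Ioo hwt hg (hrpow.const_mul b)
      fun s hs => (hbd s hs).2⟩

lemma one_div_sqrt_mem_Icc_of_mul_rpow_le {y a b u m : ℝ} (ha : 0 < a) (hu : 0 < u)
    (hy : y ∈ Icc (a * u ^ m) (b * u ^ m)) :
    1 / √y ∈ Icc (b ^ (-(1 / 2) : ℝ) * u ^ (-(m / 2))) (a ^ (-(1 / 2) : ℝ) * u ^ (-(m / 2))) := by
  have hau : 0 < a * u ^ m := mul_pos ha (Real.rpow_pos_of_pos hu m)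
  have hb : 0 ≤ b :=
    nonneg_of_mul_nonneg_left (hau.le.trans (hy.1.trans hy.2)) (Real.rpow_pos_of_pos hu m)
  have key : ∀ c, 0 ≤ c → (c * u ^ m) ^ (-(1 / 2) : ℝ) = c ^ (-(1 / 2) : ℝ) * u ^ (-(m / 2)) := by
    intro c hc
    rw [Real.mul_rpow hc (Real.rpow_nonneg hu.le m), ← Real.rpow_mul hu.le]
    ring_nf
  have hy_rpow : 1 / √y = y ^ (-(1 / 2) : ℝ) := by
    rw [Real.rpow_neg (hau.le.trans hy.1), Real.sqrt_eq_rpow, one_div (y ^ _)]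
  rw [hy_rpow, ← key a ha.le, ← key b hb]
  exact ⟨Real.rpow_le_rpow_of_nonpos (hau.trans_le hy.1) hy.2 (by norm_num),
    Real.rpow_le_rpow_of_nonpos hau hy.1 (by norm_num)⟩

lemma exists_one_div_sqrt_two_mul_primitive_mem_Icc {f V : ℝ → ℝ} {p k : ℝ} (hp : -1 < p)
    (hk : 0 < k) (hf : Continuous f) (hfas : Tendsto (fun u => f u / u ^ p) (𝓝[>] 0) (𝓝 (-k)))
    (hV : ∀ u, V u = -∫ s in (0 : ℝ)..u, f s) :
    ∃ δ > 0, ∀ u ∈ Ioc 0 δ, 1 / √(2 * V u) ∈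
      Icc ((3 * k / (p + 1)) ^ (-(1 / 2) : ℝ) * u ^ (-((p + 1) / 2)))
        ((k / (p + 1)) ^ (-(1 / 2) : ℝ) * u ^ (-((p + 1) / 2))) := by
  have hneg : Tendsto (fun u => -f u / u ^ p) (𝓝[>] 0) (𝓝 k) := by
    simpa only [neg_div, neg_neg] using hfas.neg
  obtain ⟨δ, hδ, hsub⟩ := mem_nhdsGT_iff_exists_Ioc_subset.1
    (eventually_mul_rpow_lt_of_tendsto_div_rpow hneg (half_lt_self hk)
      (by linarith : k < 3 * k / 2))
  refine ⟨δ, hδ, fun u hu =>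
    one_div_sqrt_mem_Icc_of_mul_rpow_le (div_pos hk (by linarith)) hu.1 ?_⟩
  have hV_mem := integral_mem_Icc_of_mul_rpow_le (g := fun s => -f s) hu.1.le (Or.inl hp)
    (hf.neg.intervalIntegrable 0 u)
    fun s hs => (hsub ⟨hs.1, hs.2.le.trans hu.2⟩).imp le_of_lt le_of_lt
  rw [intervalIntegral.integral_neg, ← hV, Real.zero_rpow (by linarith), sub_zero] at hV_mem
  have hdouble : ∀ c, c / (p + 1) * u ^ (p + 1) = 2 * (c / 2 * (u ^ (p + 1) / (p + 1))) := by
    intro c; ring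
  rw [hdouble, hdouble]
  exact ⟨by linarith [hV_mem.1], by linarith [hV_mem.2]⟩

section ImplicitProfile

variable {h v : ℝ → ℝ} {θ : ℝ}

-- A non-integrable `h` would have integral `0`, not `|x| ≠ 0`.
lemma intervalIntegrable_of_abs_eq_integral (himp : ∀ x, |x| = ∫ u in v x..θ, h u) {x : ℝ}
    (hx : x ≠ 0) : IntervalIntegrable h volume (v x) θ :=
  intervalIntegral.intervalIntegrable_of_integral_ne_zero (himp x ▸ abs_ne_zero.2 hx)

lemma integral_eq_abs_sub_abs_of_abs_eq_integral (himp : ∀ x, |x| = ∫ u in v x..θ, h u)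
    {x x₀ : ℝ} (hx : x ≠ 0) (hx₀ : x₀ ≠ 0) : ∫ u in v x..v x₀, h u = |x| - |x₀| := by
  have hI₀ := intervalIntegrable_of_abs_eq_integral himp hx₀
  rw [himp x, himp x₀, eq_sub_iff_add_eq, intervalIntegral.integral_add_adjacent_intervals
    ((intervalIntegrable_of_abs_eq_integral himp hx).trans hI₀.symm) hI₀]

theorem eventually_rpow_neg_mem_Icc_of_abs_eq_integral {q δ c₁ c₂ : ℝ} (hq : 0 < q)
    (hc₁ : 0 < c₁) (hc₂ : 0 < c₂) (hδ : 0 < δ)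
    (hh : ∀ u ∈ Ioc 0 δ, h u ∈ Icc (c₁ * u ^ (-(q + 1))) (c₂ * u ^ (-(q + 1))))
    (hpos : ∀ x, 0 < v x) (hv : Tendsto v (comap (fun x => |x|) atTop) (𝓝 0))
    (himp : ∀ x, |x| = ∫ u in v x..θ, h u) :
    ∀ᶠ x in comap (fun x => |x|) atTop,
      v x ^ (-q) ∈ Icc (q / (2 * c₂) * |x|) (2 * q / c₁ * |x|) := by
  obtain ⟨x₀, hx₀, hx₀δ⟩ := exists_forall_le_abs_of_eventually (hv.eventually (gt_mem_nhds hδ))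
  have hvx₀ : v x₀ < δ := hx₀δ x₀ (le_abs_self x₀)
  filter_upwards [hv.eventually (gt_mem_nhds (hpos x₀)),
    tendsto_comap.eventually (eventually_ge_atTop (2 * |x₀|)),
    tendsto_comap.eventually (eventually_ge_atTop (c₁ / q * v x₀ ^ (-q)))] with x hvx hx_far hx_far'
  have hx : x ≠ 0 := abs_pos.1 (by linarith [abs_pos.2 hx₀.ne'])
  have h0 : (0 : ℝ) ∉ uIcc (v x) (v x₀) := by
    rw [uIcc_of_le hvx.le]; exact fun h0 => (hpos x).not_ge h0.1
  have hmem := integral_mem_Icc_of_mul_rpow_le hvx.le (Or.inr ⟨by linarith, h0⟩)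
    ((intervalIntegrable_of_abs_eq_integral himp hx).trans
      (intervalIntegrable_of_abs_eq_integral himp hx₀.ne').symm)
    fun s hs => hh s ⟨(hpos x).trans hs.1, hs.2.le.trans hvx₀.le⟩
  rw [integral_eq_abs_sub_abs_of_abs_eq_integral himp hx hx₀.ne',
    show -(q + 1) + 1 = -q by ring, div_neg, ← neg_div, neg_sub] at hmem
  have hT : 0 < v x₀ ^ (-q) := Real.rpow_pos_of_pos (hpos x₀) _
  obtain ⟨hlower, hupper⟩ := hmem
  have hsplit : v x ^ (-q) = q * ((v x ^ (-q) - v x₀ ^ (-q)) / q) + v x₀ ^ (-q) := by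
    field_simp; ring
  generalize (v x ^ (-q) - v x₀ ^ (-q)) / q = a at hlower hupper hsplit
  rw [hsplit]
  rw [div_mul_eq_mul_div, div_le_iff₀ hq] at hx_far'
  constructor
  · rw [div_mul_eq_mul_div, div_le_iff₀ (by positivity)]
    nlinarith [abs_nonneg x₀]
  · rw [div_mul_eq_mul_div, le_div_iff₀ hc₁]
    nlinarith [abs_nonneg x₀, mul_le_mul_of_nonneg_left hlower hq.le]

end ImplicitProfile

lemma mem_Icc_of_rpow_neg_mem_Icc {w y A B q : ℝ} (hw : 0 < w) (hy : 0 < y) (hA : 0 < A)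
    (hq : 0 < q) (h : w ^ (-q) ∈ Icc (A * y) (B * y)) :
    w ∈ Icc (B ^ (-q⁻¹) * y ^ (-q⁻¹)) (A ^ (-q⁻¹) * y ^ (-q⁻¹)) := by
  have hB : 0 < B := pos_of_mul_pos_left ((mul_pos hA hy).trans_le (h.1.trans h.2)) hy.le
  have hw_eq : w = (w ^ (-q)) ^ (-q⁻¹) := by
    rw [← Real.rpow_mul hw.le, neg_mul_neg, mul_inv_cancel₀ hq.ne', Real.rpow_one]
  have he : -q⁻¹ ≤ 0 := neg_nonpos.2 (inv_nonneg.2 hq.le)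
  rw [hw_eq, ← Real.mul_rpow hB.le hy.le, ← Real.mul_rpow hA.le hy.le]
  exact ⟨Real.rpow_le_rpow_of_nonpos (Real.rpow_pos_of_pos hw _) h.2 he,
    Real.rpow_le_rpow_of_nonpos (mul_pos hA hy) h.1 he⟩

theorem stmt_4_general (f v : ℝ → ℝ) (p k θs : ℝ) (hp : 1 < p) (hk : 0 < k)
    (hf : ContDiff ℝ 1 f)
    (hfas : Tendsto (fun u => f u / u ^ p) (nhdsWithin 0 (Ioi 0)) (nhds (-k)))
    (V : ℝ → ℝ) (hV : ∀ u, V u = -∫ s in (0 : ℝ)..u, f s)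
    (hpos : ∀ x, 0 < v x)
    (htop : Tendsto v atTop (nhds 0))
    (hbot : Tendsto v atBot (nhds 0))
    (himp : ∀ x : ℝ, |x| = ∫ u in (v x)..θs, 1 / Real.sqrt (2 * V u)) :
    ∃ C₁ C₂ R : ℝ, 0 < C₁ ∧ 0 < C₂ ∧ 0 < R ∧
      ∀ x : ℝ, R ≤ |x| →
        C₁ * |x| ^ (-(2 / (p - 1))) ≤ v x ∧ v x ≤ C₂ * |x| ^ (-(2 / (p - 1))) := by
  set q := (p - 1) / 2 with hq_def
  have hq : 0 < q := half_pos (sub_pos.2 hp)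
  obtain ⟨δ, hδ, hbd⟩ := exists_one_div_sqrt_two_mul_primitive_mem_Icc (by linarith) hk
    hf.continuous hfas hV
  simp only [show -((p + 1) / 2) = -(q + 1) by ring] at hbd
  have hv : Tendsto v (comap (fun x => |x|) atTop) (𝓝 0) := by
    rw [comap_abs_atTop]; exact hbot.sup htop
  obtain ⟨R, hR, hRbd⟩ := exists_forall_le_abs_of_eventually
    (eventually_rpow_neg_mem_Icc_of_abs_eq_integral hq (by positivity) (by positivity) hδ hbd
      hpos hv himp)
  rw [show -(2 / (p - 1)) = -q⁻¹ by rw [hq_def, inv_div]]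
  refine ⟨_, _, R, by positivity, by positivity, hR, fun x hx =>
    mem_Icc_of_rpow_neg_mem_Icc (hpos x) (hR.trans_le hx) (by positivity) hq (hRbd x hx)⟩

/-- Algebraic decay of the bump solution in the degenerate case `f'(0) = 0`,
`f(u) ~ -k u^p` as `u → 0⁺`: the bump `v`, given implicitly by
`|x| = ∫_{v(x)}^{θ*} du/√(2V(u))`, satisfies `v(x) ≍ |x|^{-2/(p-1)}` as `|x| → ∞`. -/
theorem stmt_4 (f v : ℝ → ℝ) (p k θs : ℝ) (hp : 1 < p) (hk : 0 < k) (hθs : 0 < θs)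
    (hf : ContDiff ℝ 1 f) (hf0 : f 0 = 0) (hf'0 : deriv f 0 = 0)
    (hfas : Tendsto (fun u => f u / u ^ p) (nhdsWithin 0 (Ioi 0)) (nhds (-k)))
    (V : ℝ → ℝ) (hV : ∀ u, V u = -∫ s in (0 : ℝ)..u, f s)
    (hv : ContDiff ℝ 2 v)
    (hpos : ∀ x, 0 < v x)
    (heven : ∀ x, v (-x) = v x)
    (hdec : AntitoneOn v (Ici 0))
    (hode : ∀ x, deriv (deriv v) x + f (v x) = 0)
    (htop : Tendsto v atTop (nhds 0))
    (hbot : Tendsto v atBot (nhds 0))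
    (himp : ∀ x : ℝ, |x| = ∫ u in (v x)..θs, 1 / Real.sqrt (2 * V u)) :
    ∃ C₁ C₂ R : ℝ, 0 < C₁ ∧ 0 < C₂ ∧ 0 < R ∧
      ∀ x : ℝ, R ≤ |x| →
        C₁ * |x| ^ (-(2 / (p - 1))) ≤ v x ∧ v x ≤ C₂ * |x| ^ (-(2 / (p - 1))) :=
  stmt_4_general f v p k θs hp hk hf hfas V hV hpos htop hbot himp
end

section
/- Let f : [0,∞) → ℝ be C¹ with f(0) = 0 and f'(0) < 0, and let v be a positive symmetric decreasing solution of v'' + f(v) = 0 with v(±∞) = 0, given implicitly by |x| = ∫_{v(x)}^{θ*} du/√(2V(u)) where V(u) = −∫₀ᵘ f(s)ds. Then with μ = √(−f'(0)), for every ε > 0 there exist constants c₁, c₂ > 0 such that c₁ e^{−(μ+ε)|x|} ≤ v(x) ≤ c₂ e^{−(μ−ε)|x|} for all large |x|. -/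
open Set Filter

private lemma decay_aux (f v : ℝ → ℝ) (θs : ℝ) (hθs : 0 < θs)
    (hf : ContDiff ℝ 1 f) (hf0 : f 0 = 0) (hf'0 : deriv f 0 < 0)
    (V : ℝ → ℝ) (hV : ∀ u, V u = -∫ s in (0 : ℝ)..u, f s)
    (hpos : ∀ x, 0 < v x)
    (heven : ∀ x, v (-x) = v x)
    (htop : Tendsto v atTop (nhds 0))
    (himp : ∀ x : ℝ, |x| = ∫ u in (v x)..θs, 1 / Real.sqrt (2 * V u))
    (ε : ℝ) (hε : 0 < ε) (hεμ : ε < Real.sqrt (-deriv f 0)) :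
    ∃ c₁ c₂ R : ℝ, 0 < c₁ ∧ 0 < c₂ ∧ 0 < R ∧
      ∀ x : ℝ, R ≤ |x| →
        c₁ * Real.exp (-(Real.sqrt (-deriv f 0) + ε) * |x|) ≤ v x ∧
        v x ≤ c₂ * Real.exp (-(Real.sqrt (-deriv f 0) - ε) * |x|) := by
  set μ : ℝ := Real.sqrt (-deriv f 0) with hμdef
  have hμ : 0 < μ := Real.sqrt_pos.mpr (by linarith)
  have hμsq : μ ^ 2 = -deriv f 0 := Real.sq_sqrt (by linarith)
  set ε' : ℝ := 2 * μ * ε - ε ^ 2 with hε'def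
  have hε' : 0 < ε' := by nlinarith
  -- continuity of deriv f at 0
  have hcd : Continuous (deriv f) := hf.continuous_deriv le_rfl
  obtain ⟨δ₀, hδ₀pos, hδ₀⟩ : ∃ δ₀ > 0, ∀ t : ℝ, |t| < δ₀ → |deriv f t - deriv f 0| < ε' := by
    obtain ⟨δ₀, h1, h2⟩ := Metric.continuous_iff.mp hcd 0 ε' hε'
    exact ⟨δ₀, h1, fun t ht => by
      have := h2 t (by simpa [Real.dist_eq] using ht)
      simpa [Real.dist_eq] using this⟩
  set δ : ℝ := min (δ₀ / 2) θs with hδdef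
  have hδpos : 0 < δ := lt_min (by linarith) hθs
  have hδθ : δ ≤ θs := min_le_right _ _
  have hδ₀' : δ < δ₀ := lt_of_le_of_lt (min_le_left _ _) (by linarith)
  -- bound on f near 0
  have hfs : ∀ s ∈ Icc (0 : ℝ) δ, |f s - deriv f 0 * s| ≤ ε' * s := by
    intro s hs
    have hdiff : ∀ t ∈ uIcc (0 : ℝ) s, DifferentiableAt ℝ f t :=
      fun t _ => (hf.differentiable one_ne_zero).differentiableAt
    have hint : IntervalIntegrable (deriv f) MeasureTheory.volume 0 s :=
      hcd.intervalIntegrable _ _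
    have h1 : ∫ t in (0:ℝ)..s, deriv f t = f s - f 0 :=
      intervalIntegral.integral_deriv_eq_sub hdiff hint
    have h2 : ∫ t in (0:ℝ)..s, (deriv f t - deriv f 0) = f s - deriv f 0 * s := by
      rw [intervalIntegral.integral_sub hint (intervalIntegrable_const)]
      rw [h1, hf0, intervalIntegral.integral_const, smul_eq_mul]
      ring
    have h3 : ∀ t ∈ Set.uIoc (0:ℝ) s, ‖deriv f t - deriv f 0‖ ≤ ε' := by
      intro t ht
      have hs0 : (0:ℝ) ≤ s := hs.1
      rw [Set.uIoc_of_le hs0] at ht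
      have h4 : |t| < δ₀ := by
        rw [abs_of_pos ht.1]
        exact lt_of_le_of_lt (le_trans ht.2 hs.2) hδ₀'
      exact le_of_lt (hδ₀ t h4)
    have := intervalIntegral.norm_integral_le_of_norm_le_const h3
    rw [h2] at this
    simpa [abs_of_nonneg hs.1] using this
  -- bound on 2 * V
  have hV2 : ∀ u ∈ Icc (0 : ℝ) δ, (μ - ε) ^ 2 * u ^ 2 ≤ 2 * V u ∧ 2 * V u ≤ (μ + ε) ^ 2 * u ^ 2 := by
    intro u hu
    have hVu : V u = ∫ s in (0:ℝ)..u, (-f s) := by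
      rw [hV u, ← intervalIntegral.integral_neg]
    have hintf : IntervalIntegrable (fun s => -f s) MeasureTheory.volume 0 u :=
      (hf.continuous.neg).intervalIntegrable _ _
    have hlow : (μ ^ 2 - ε') * (u ^ 2 / 2) ≤ V u := by
      have hmono := intervalIntegral.integral_mono_on (f := fun s => (μ ^ 2 - ε') * s)
        (g := fun s => -f s) hu.1
        ((continuous_const.mul continuous_id).intervalIntegrable _ _) hintf
        (fun s hs => by
          have := hfs s ⟨hs.1, le_trans hs.2 hu.2⟩
          have h5 : f s - deriv f 0 * s ≤ ε' * s := le_trans (le_abs_self _) this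
          have h6 : (μ ^ 2 - ε') * s = -(deriv f 0 * s) - ε' * s := by rw [hμsq]; ring
          beta_reduce
          linarith)
      rw [intervalIntegral.integral_const_mul, integral_id] at hmono
      rw [hVu]
      calc (μ ^ 2 - ε') * (u ^ 2 / 2) = (μ ^ 2 - ε') * ((u ^ 2 - 0 ^ 2) / 2) := by ring
        _ ≤ _ := hmono
    have hhigh : V u ≤ (μ ^ 2 + ε') * (u ^ 2 / 2) := by
      have hmono := intervalIntegral.integral_mono_on (f := fun s => -f s)
        (g := fun s => (μ ^ 2 + ε') * s) hu.1 hintf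
        ((continuous_const.mul continuous_id).intervalIntegrable _ _)
        (fun s hs => by
          have := hfs s ⟨hs.1, le_trans hs.2 hu.2⟩
          have h5 : -(ε' * s) ≤ f s - deriv f 0 * s := neg_le_of_abs_le this
          have h6 : (μ ^ 2 + ε') * s = -(deriv f 0 * s) + ε' * s := by rw [hμsq]; ring
          beta_reduce
          linarith)
      rw [intervalIntegral.integral_const_mul, integral_id] at hmono
      rw [hVu]
      calc (∫ s in (0:ℝ)..u, -f s) ≤ (μ ^ 2 + ε') * ((u ^ 2 - 0 ^ 2) / 2) := hmono
        _ = (μ ^ 2 + ε') * (u ^ 2 / 2) := by ring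
    constructor
    · nlinarith [sq_nonneg u]
    · nlinarith [sq_nonneg u]
  -- bound on integrand
  have hg : ∀ u : ℝ, 0 < u → u ≤ δ →
      1 / ((μ + ε) * u) ≤ 1 / Real.sqrt (2 * V u) ∧
      1 / Real.sqrt (2 * V u) ≤ 1 / ((μ - ε) * u) := by
    intro u hu0 huδ
    obtain ⟨h1, h2⟩ := hV2 u ⟨le_of_lt hu0, huδ⟩
    have hmε : 0 < μ - ε := by linarith
    have hmu : 0 < (μ - ε) * u := mul_pos hmε hu0
    have hsl : (μ - ε) * u ≤ Real.sqrt (2 * V u) := by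
      have : Real.sqrt ((μ - ε) ^ 2 * u ^ 2) ≤ Real.sqrt (2 * V u) := Real.sqrt_le_sqrt h1
      rwa [show (μ - ε) ^ 2 * u ^ 2 = ((μ - ε) * u) ^ 2 by ring,
        Real.sqrt_sq (le_of_lt hmu)] at this
    have hsu : Real.sqrt (2 * V u) ≤ (μ + ε) * u := by
      have : Real.sqrt (2 * V u) ≤ Real.sqrt ((μ + ε) ^ 2 * u ^ 2) := Real.sqrt_le_sqrt h2
      rwa [show (μ + ε) ^ 2 * u ^ 2 = ((μ + ε) * u) ^ 2 by ring,
        Real.sqrt_sq (by positivity)] at this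
    have hspos : 0 < Real.sqrt (2 * V u) := lt_of_lt_of_le hmu hsl
    exact ⟨one_div_le_one_div_of_le hspos hsu, one_div_le_one_div_of_le hmu hsl⟩
  -- choose R
  obtain ⟨R₀, hR₀⟩ : ∃ R₀ : ℝ, ∀ y ≥ R₀, v y < δ := by
    have := (htop.eventually_lt_const hδpos)
    exact eventually_atTop.mp this
  set R : ℝ := max R₀ 1 with hRdef
  have hR1 : (1:ℝ) ≤ R := le_max_right _ _
  set C : ℝ := ∫ u in δ..θs, 1 / Real.sqrt (2 * V u) with hCdef
  have hC0 : 0 ≤ C := intervalIntegral.integral_nonneg hδθ (fun u _ => by positivity)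
  refine ⟨δ * Real.exp ((μ + ε) * C), δ * Real.exp ((μ - ε) * C), R, by positivity, by positivity,
    lt_of_lt_of_le one_pos hR1, ?_⟩
  intro x hx
  have hvx_eq : v |x| = v x := by
    rcases abs_choice x with h | h
    · rw [h]
    · rw [h, heven]
  have hvδ : v x < δ := by
    rw [← hvx_eq]
    exact hR₀ _ (le_trans (le_max_left _ _) hx)
  have hvpos : 0 < v x := hpos x
  have hxpos : (0:ℝ) < |x| := lt_of_lt_of_le (lt_of_lt_of_le one_pos hR1) hx
  -- integrability
  have hint_all : IntervalIntegrable (fun u => 1 / Real.sqrt (2 * V u))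
      MeasureTheory.volume (v x) θs := by
    by_contra h
    have := intervalIntegral.integral_undef h
    rw [← himp x] at this
    linarith
  have huIcc1 : Set.uIcc (v x) δ ⊆ Set.uIcc (v x) θs := by
    rw [Set.uIcc_of_le (le_of_lt hvδ), Set.uIcc_of_le (by linarith)]
    exact Set.Icc_subset_Icc le_rfl hδθ
  have huIcc2 : Set.uIcc δ θs ⊆ Set.uIcc (v x) θs := by
    rw [Set.uIcc_of_le hδθ, Set.uIcc_of_le (by linarith)]
    exact Set.Icc_subset_Icc (le_of_lt hvδ) le_rfl
  have hint1 : IntervalIntegrable (fun u => 1 / Real.sqrt (2 * V u))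
      MeasureTheory.volume (v x) δ := hint_all.mono_set huIcc1
  have hint2 : IntervalIntegrable (fun u => 1 / Real.sqrt (2 * V u))
      MeasureTheory.volume δ θs := hint_all.mono_set huIcc2
  have hsplit : |x| = (∫ u in (v x)..δ, 1 / Real.sqrt (2 * V u)) + C := by
    rw [himp x, ← intervalIntegral.integral_add_adjacent_intervals hint1 hint2]
  -- comparison with 1/u integrals
  have hcont1 : ContinuousOn (fun u : ℝ => 1 / u) (Set.uIcc (v x) δ) := by
    rw [Set.uIcc_of_le (le_of_lt hvδ)]
    apply ContinuousOn.div continuousOn_const continuousOn_id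
    intro u hu
    exact ne_of_gt (lt_of_lt_of_le hvpos hu.1)
  have hintc : IntervalIntegrable (fun u : ℝ => 1 / u) MeasureTheory.volume (v x) δ :=
    hcont1.intervalIntegrable
  have hloginv : ∫ u in (v x)..δ, 1 / u = Real.log (δ / v x) :=
    integral_one_div_of_pos hvpos hδpos
  set L : ℝ := Real.log (δ / v x) with hLdef
  have hmε : 0 < μ - ε := by linarith
  have hpε : 0 < μ + ε := by linarith
  have hlow : (μ + ε)⁻¹ * L ≤ ∫ u in (v x)..δ, 1 / Real.sqrt (2 * V u) := by
    have hmono := intervalIntegral.integral_mono_on (f := fun u => (μ + ε)⁻¹ * (1 / u))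
      (g := fun u => 1 / Real.sqrt (2 * V u)) (le_of_lt hvδ)
      (hintc.const_mul _) hint1
      (fun u hu => by
        have hu0 : 0 < u := lt_of_lt_of_le hvpos hu.1
        have := (hg u hu0 hu.2).1
        calc (μ + ε)⁻¹ * (1 / u) = 1 / ((μ + ε) * u) := by
              rw [one_div, one_div, mul_inv]
          _ ≤ _ := this)
    rwa [intervalIntegral.integral_const_mul, hloginv] at hmono
  have hhigh : (∫ u in (v x)..δ, 1 / Real.sqrt (2 * V u)) ≤ (μ - ε)⁻¹ * L := by
    have hmono := intervalIntegral.integral_mono_on (g := fun u => (μ - ε)⁻¹ * (1 / u))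
      (f := fun u => 1 / Real.sqrt (2 * V u)) (le_of_lt hvδ)
      hint1 (hintc.const_mul _)
      (fun u hu => by
        have hu0 : 0 < u := lt_of_lt_of_le hvpos hu.1
        have := (hg u hu0 hu.2).2
        calc (1 : ℝ) / Real.sqrt (2 * V u) ≤ 1 / ((μ - ε) * u) := this
          _ = (μ - ε)⁻¹ * (1 / u) := by rw [one_div, one_div, mul_inv])
    rwa [intervalIntegral.integral_const_mul, hloginv] at hmono
  have hL1 : L ≤ (μ + ε) * (|x| - C) := by
    have h1 : (μ + ε)⁻¹ * L ≤ |x| - C := by linarith [hlow, hsplit]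
    calc L = (μ + ε) * ((μ + ε)⁻¹ * L) := by field_simp
      _ ≤ (μ + ε) * (|x| - C) := by
          exact mul_le_mul_of_nonneg_left h1 (le_of_lt hpε)
  have hL2 : (μ - ε) * (|x| - C) ≤ L := by
    have h1 : |x| - C ≤ (μ - ε)⁻¹ * L := by linarith [hhigh, hsplit]
    calc (μ - ε) * (|x| - C) ≤ (μ - ε) * ((μ - ε)⁻¹ * L) :=
          mul_le_mul_of_nonneg_left h1 (le_of_lt hmε)
      _ = L := by field_simp
  have hvx_val : v x = δ * Real.exp (-L) := by
    have h1 : Real.exp L = δ / v x := Real.exp_log (by positivity)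
    rw [Real.exp_neg, h1]
    field_simp
  have e1 : Real.exp (-(μ + ε) * (|x| - C)) ≤ Real.exp (-L) :=
    Real.exp_le_exp.mpr (by linarith)
  have e2 : Real.exp (-L) ≤ Real.exp (-(μ - ε) * (|x| - C)) :=
    Real.exp_le_exp.mpr (by linarith)
  constructor
  · calc δ * Real.exp ((μ + ε) * C) * Real.exp (-(μ + ε) * |x|)
        = δ * Real.exp (-(μ + ε) * (|x| - C)) := by
          rw [mul_assoc, ← Real.exp_add]; ring_nf
      _ ≤ δ * Real.exp (-L) := mul_le_mul_of_nonneg_left e1 hδpos.le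
      _ = v x := hvx_val.symm
  · calc v x = δ * Real.exp (-L) := hvx_val
      _ ≤ δ * Real.exp (-(μ - ε) * (|x| - C)) := mul_le_mul_of_nonneg_left e2 hδpos.le
      _ = δ * Real.exp ((μ - ε) * C) * Real.exp (-(μ - ε) * |x|) := by
          rw [mul_assoc, ← Real.exp_add]; ring_nf

/-- Exponential decay of the bump solution in the non-degenerate case `f'(0) < 0`:
with `μ = √(-f'(0))`, for every `ε > 0` one has
`c₁ e^{-(μ+ε)|x|} ≤ v(x) ≤ c₂ e^{-(μ-ε)|x|}` for large `|x|`. -/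
theorem stmt_5 (f v : ℝ → ℝ) (θs : ℝ) (hθs : 0 < θs)
    (hf : ContDiff ℝ 1 f) (hf0 : f 0 = 0) (hf'0 : deriv f 0 < 0)
    (V : ℝ → ℝ) (hV : ∀ u, V u = -∫ s in (0 : ℝ)..u, f s)
    (hv : ContDiff ℝ 2 v)
    (hpos : ∀ x, 0 < v x)
    (heven : ∀ x, v (-x) = v x)
    (hdec : AntitoneOn v (Ici 0))
    (hode : ∀ x, deriv (deriv v) x + f (v x) = 0)
    (htop : Tendsto v atTop (nhds 0))
    (hbot : Tendsto v atBot (nhds 0))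
    (himp : ∀ x : ℝ, |x| = ∫ u in (v x)..θs, 1 / Real.sqrt (2 * V u)) :
    ∀ ε > 0, ∃ c₁ c₂ R : ℝ, 0 < c₁ ∧ 0 < c₂ ∧ 0 < R ∧
      ∀ x : ℝ, R ≤ |x| →
        c₁ * Real.exp (-(Real.sqrt (-deriv f 0) + ε) * |x|) ≤ v x ∧
        v x ≤ c₂ * Real.exp (-(Real.sqrt (-deriv f 0) - ε) * |x|) := by
  intro ε hε
  set μ : ℝ := Real.sqrt (-deriv f 0) with hμdef
  have hμ : 0 < μ := Real.sqrt_pos.mpr (by linarith)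
  set ε₀ : ℝ := min ε (μ / 2) with hε₀def
  have hε₀pos : 0 < ε₀ := lt_min hε (by linarith)
  have hε₀μ : ε₀ < μ := lt_of_le_of_lt (min_le_right _ _) (by linarith)
  have hε₀ε : ε₀ ≤ ε := min_le_left _ _
  obtain ⟨c₁, c₂, R, hc₁, hc₂, hR, hmain⟩ :=
    decay_aux f v θs hθs hf hf0 hf'0 V hV hpos heven htop himp ε₀ hε₀pos hε₀μ
  refine ⟨c₁, c₂, R, hc₁, hc₂, hR, fun x hx => ?_⟩
  obtain ⟨h1, h2⟩ := hmain x hx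
  have hxnn : (0:ℝ) ≤ |x| := abs_nonneg x
  have hprod : 0 ≤ (ε - ε₀) * |x| := mul_nonneg (by linarith) hxnn
  have e1 : Real.exp (-(μ + ε) * |x|) ≤ Real.exp (-(μ + ε₀) * |x|) :=
    Real.exp_le_exp.mpr (by nlinarith)
  have e2 : Real.exp (-(μ - ε₀) * |x|) ≤ Real.exp (-(μ - ε) * |x|) :=
    Real.exp_le_exp.mpr (by nlinarith)
  exact ⟨le_trans (mul_le_mul_of_nonneg_left e1 hc₁.le) h1,
    le_trans h2 (mul_le_mul_of_nonneg_left e2 hc₂.le)⟩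
end

section
/- Let g, K : [0,∞) → ℝ be continuous with ‖K‖_∞ ≤ 𝒦 and ∫₀^∞ g² dx ≤ G² < ∞. Let w ∈ C²([0,L]) solve w'' = g − K w with w'(0) = 0, w(0) = α. Then max_{0≤x≤L} |w(x)| ≤ 2^l |α| + (2^l − 1)·2δ√L·G, where l is any integer with δ := L/l satisfying 2 δ L 𝒦 ≤ 1. -/
open Set MeasureTheory

/-!
Let `m_k` be the maximum of `|w|` on `[0, kδ]`. Integrating `w'' = g - K w` from `0` and applying
Cauchy–Schwarz to `g` gives `|w'| ≤ √L G + L 𝒦 m_{k+1}` on `[0, (k+1)δ]`. The mean value theorem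
over the last step of length `δ` then gives `m_{k+1} ≤ m_k + δ (√L G + L 𝒦 m_{k+1})`, and
`2 δ L 𝒦 ≤ 1` lets the `m_{k+1}` on the right be absorbed: `m_{k+1} ≤ 2 m_k + 2 δ √L G`.
Iterating `l` times from `m_0 = |α|` gives the bound.
-/

theorem integral_abs_le_sqrt_integral_sq_mul_sqrt_measureReal {α : Type*} [MeasurableSpace α]
    {μ : Measure α} [IsFiniteMeasure μ] {f : α → ℝ} (hf : MemLp f 2 μ) :
    ∫ a, |f a| ∂μ ≤ Real.sqrt (∫ a, f a ^ 2 ∂μ) * Real.sqrt (μ.real univ) := by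
  have hCS := integral_mul_norm_le_Lp_mul_Lq Real.HolderConjugate.two_two
    (by simpa using hf) (memLp_const (μ := μ) (p := ENNReal.ofReal 2) (1 : ℝ))
  simp only [norm_one, mul_one, Real.norm_eq_abs, integral_const, smul_eq_mul,
    Real.rpow_two, sq_abs, one_pow, mul_one] at hCS
  simpa only [Real.sqrt_eq_rpow] using hCS

theorem intervalIntegral_abs_le_sqrt_mul {g : ℝ → ℝ} {G y : ℝ} (hgc : Continuous g) (hG : 0 ≤ G)
    (hg2 : ∫ x in Ioi (0 : ℝ), g x ^ 2 ≤ G ^ 2)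
    (hg2i : IntegrableOn (fun x => g x ^ 2) (Ioi (0 : ℝ))) (hy : 0 ≤ y) :
    ∫ t in 0..y, |g t| ≤ Real.sqrt y * G := by
  have : IsFiniteMeasure (volume.restrict (Ioc 0 y)) :=
    isFiniteMeasure_restrict.mpr measure_Ioc_lt_top.ne
  have hmem : MemLp g 2 (volume.restrict (Ioc 0 y)) :=
    (memLp_two_iff_integrable_sq hgc.aestronglyMeasurable).mpr (hg2i.mono_set Ioc_subset_Ioi_self)
  have hsub : ∫ t in Ioc 0 y, g t ^ 2 ≤ G ^ 2 :=
    (setIntegral_mono_set hg2i (ae_of_all _ fun t => sq_nonneg (g t))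
      (ae_of_all _ Ioc_subset_Ioi_self)).trans hg2
  calc ∫ t in 0..y, |g t|
      ≤ Real.sqrt (∫ t in Ioc 0 y, g t ^ 2) * Real.sqrt (volume.real (Ioc 0 y)) := by
        rw [intervalIntegral.integral_of_le hy]
        simpa using integral_abs_le_sqrt_integral_sq_mul_sqrt_measureReal hmem
    _ ≤ G * Real.sqrt y := by
        rw [Real.volume_real_Ioc_of_le hy, sub_zero]
        gcongr
        exact Real.sqrt_le_iff.mpr ⟨hG, hsub⟩
    _ = Real.sqrt y * G := mul_comm _ _

theorem abs_deriv_le_of_ode {g K w : ℝ → ℝ} {𝒦 M b : ℝ} (hgc : Continuous g)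
    (hw : ContDiff ℝ 2 w) (hode : ∀ x ∈ Icc 0 b, deriv (deriv w) x = g x - K x * w x)
    (hw'0 : deriv w 0 = 0) (hK : ∀ x ∈ Icc 0 b, |K x| ≤ 𝒦) (hM : ∀ x ∈ Icc 0 b, |w x| ≤ M) :
    ∀ y ∈ Icc 0 b, |deriv w y| ≤ (∫ t in 0..y, |g t|) + 𝒦 * M * y := by
  intro y ⟨hy0, hyb⟩
  have hw' : ContDiff ℝ 1 (deriv w) := hw.iterate_deriv' 1 1
  have hFTC : deriv w y = ∫ t in 0..y, deriv (deriv w) t := by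
    rw [intervalIntegral.integral_deriv_eq_sub' _ rfl
      (fun t _ => hw'.differentiable one_ne_zero t) (hw'.continuous_deriv le_rfl).continuousOn,
      hw'0, sub_zero]
  have hbound : ∀ t ∈ Ioc 0 y, ‖deriv (deriv w) t‖ ≤ |g t| + 𝒦 * M := by
    intro t ⟨ht0, hty⟩
    have ht : t ∈ Icc 0 b := ⟨ht0.le, hty.trans hyb⟩
    have hKw : |K t * w t| ≤ 𝒦 * M := by
      rw [abs_mul]
      exact mul_le_mul (hK t ht) (hM t ht) (abs_nonneg _) ((abs_nonneg _).trans (hK t ht))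
    rw [hode t ht, Real.norm_eq_abs]
    exact (abs_sub _ _).trans (add_le_add_right hKw _)
  calc |deriv w y| ≤ ∫ t in 0..y, (|g t| + 𝒦 * M) := by
        rw [hFTC, ← Real.norm_eq_abs]
        exact intervalIntegral.norm_integral_le_of_norm_le hy0 (ae_of_all _ hbound)
          ((hgc.abs.add continuous_const).intervalIntegrable _ _)
    _ = (∫ t in 0..y, |g t|) + 𝒦 * M * y := by
        rw [intervalIntegral.integral_add (hgc.abs.intervalIntegrable _ _)
          intervalIntegrable_const, intervalIntegral.integral_const, smul_eq_mul]
        ring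

theorem abs_le_two_mul_add_of_abs_deriv_le {w : ℝ → ℝ} {a b δ A B m : ℝ}
    (hw : Differentiable ℝ w) (ha : 0 ≤ a) (hab : a ≤ b) (hbδ : b ≤ a + δ) (hA : 0 ≤ A)
    (hδB : 2 * δ * B ≤ 1)
    (hderiv : ∀ M, (∀ t ∈ Icc 0 b, |w t| ≤ M) → ∀ t ∈ Icc 0 b, |deriv w t| ≤ A + B * M)
    (hm : ∀ t ∈ Icc 0 a, |w t| ≤ m) :
    ∀ t ∈ Icc 0 b, |w t| ≤ 2 * m + 2 * δ * A := by
  obtain ⟨x₀, hx₀, hmax⟩ := isCompact_Icc.exists_isMaxOn (nonempty_Icc.mpr (ha.trans hab))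
    hw.continuous.abs.continuousOn
  set M := |w x₀|
  have hM : ∀ t ∈ Icc 0 b, |w t| ≤ M := fun t ht => hmax ht
  suffices M ≤ 2 * m + 2 * δ * A from fun t ht => (hM t ht).trans this
  have hm0 : 0 ≤ m := (abs_nonneg _).trans (hm a ⟨ha, le_rfl⟩)
  have hδA : 0 ≤ δ * A := mul_nonneg (by linarith) hA
  rcases le_total x₀ a with hx₀a | hax₀
  · linarith [hm x₀ ⟨hx₀.1, hx₀a⟩]
  · have hincr : |w x₀ - w a| ≤ (A + B * M) * |x₀ - a| :=
      Convex.norm_image_sub_le_of_norm_deriv_le (fun t _ => hw t) (hderiv M hM) (convex_Icc 0 b)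
        ⟨ha, hab⟩ hx₀
    have hAB : 0 ≤ A + B * M := (abs_nonneg _).trans (hderiv M hM b ⟨ha.trans hab, le_rfl⟩)
    have hgap : |x₀ - a| ≤ δ := by rw [abs_of_nonneg (sub_nonneg.mpr hax₀)]; linarith [hx₀.2]
    have hMa : M ≤ |w a| + |w x₀ - w a| := by simpa using abs_add_le (w a) (w x₀ - w a)
    have hM0 : 0 ≤ M := abs_nonneg _
    nlinarith [hm a ⟨ha, le_rfl⟩, mul_le_mul_of_nonneg_left hgap hAB]

theorem abs_le_two_pow_mul_add_of_abs_deriv_le {w : ℝ → ℝ} {L δ A B : ℝ} (hw : Differentiable ℝ w)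
    (hδ : 0 ≤ δ) (hA : 0 ≤ A) (hδB : 2 * δ * B ≤ 1)
    (hderiv : ∀ b ≤ L, ∀ M, (∀ t ∈ Icc 0 b, |w t| ≤ M) → ∀ t ∈ Icc 0 b, |deriv w t| ≤ A + B * M)
    (n : ℕ) (hn : n * δ ≤ L) :
    ∀ t ∈ Icc 0 (n * δ), |w t| ≤ 2 ^ n * |w 0| + (2 ^ n - 1) * (2 * δ * A) := by
  induction n with
  | zero =>
    intro t ht
    obtain rfl : t = 0 := by simpa using ht
    simp
  | succ n ih =>
    push_cast at hn ⊢
    rw [add_one_mul] at hn ⊢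
    have hstep := abs_le_two_mul_add_of_abs_deriv_le hw (by positivity) (by linarith) le_rfl hA
      hδB (hderiv _ hn) (ih (by linarith))
    intro t ht
    exact (hstep t ht).trans_eq (by ring)

theorem stmt_6_general (g K w : ℝ → ℝ) (𝒦 G L α : ℝ) (l : ℕ) (hl : 0 < l) (hL : 0 < L)
    (hG : 0 ≤ G)
    (hgc : Continuous g)
    (hKb : ∀ x, |K x| ≤ 𝒦)
    (hg2 : ∫ x in Ioi (0 : ℝ), (g x) ^ 2 ≤ G ^ 2)
    (hg2i : IntegrableOn (fun x => (g x) ^ 2) (Ioi (0 : ℝ)))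
    (hw : ContDiff ℝ 2 w)
    (hode : ∀ x ∈ Icc 0 L, deriv (deriv w) x = g x - K x * w x)
    (hw'0 : deriv w 0 = 0) (hw0 : w 0 = α)
    (hδ : 2 * (L / l) * L * 𝒦 ≤ 1) :
    ∀ x ∈ Icc 0 L, |w x| ≤ 2 ^ l * |α| + (2 ^ l - 1) * (2 * (L / l) * Real.sqrt L * G) := by
  have h𝒦 : 0 ≤ 𝒦 := (abs_nonneg _).trans (hKb 0)
  have hderiv : ∀ b ≤ L, ∀ M, (∀ t ∈ Icc 0 b, |w t| ≤ M) →
      ∀ t ∈ Icc 0 b, |deriv w t| ≤ Real.sqrt L * G + L * 𝒦 * M := by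
    intro b hbL M hM t ht
    have hM0 : 0 ≤ M := (abs_nonneg _).trans (hM t ht)
    have htL : t ≤ L := ht.2.trans hbL
    have hg : ∫ s in 0..t, |g s| ≤ Real.sqrt L * G :=
      (intervalIntegral_abs_le_sqrt_mul hgc hG hg2 hg2i ht.1).trans (by gcongr)
    have hKw : 𝒦 * M * t ≤ L * 𝒦 * M := by nlinarith [mul_nonneg h𝒦 hM0]
    exact (abs_deriv_le_of_ode hgc hw (fun x hx => hode x ⟨hx.1, hx.2.trans hbL⟩) hw'0
      (fun x _ => hKb x) hM t ht).trans (add_le_add hg hKw)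
  have hlδ : (l : ℝ) * (L / l) = L := mul_div_cancel₀ L (by positivity)
  intro x hx
  have := abs_le_two_pow_mul_add_of_abs_deriv_le (hw.differentiable two_ne_zero) (by positivity)
    (by positivity) (by linarith) hderiv l hlδ.le x (by rwa [hlδ])
  simpa only [hw0, mul_assoc] using this

/-- Continuous-dependence estimate for the linear ODE `w'' = g - K w` on `[0,L]` with
`w'(0) = 0`, `w(0) = α`: if `|K| ≤ 𝒦`, `‖g‖_{L²(0,∞)} ≤ G` and `δ = L/l` satisfies
`2δL𝒦 ≤ 1`, then `max_{[0,L]} |w| ≤ 2^l |α| + (2^l - 1)·2δ√L·G`. -/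
theorem stmt_6 (g K w : ℝ → ℝ) (𝒦 G L α : ℝ) (l : ℕ) (hl : 0 < l) (hL : 0 < L)
    (hG : 0 ≤ G)
    (hgc : Continuous g) (hKc : Continuous K)
    (hKb : ∀ x, |K x| ≤ 𝒦)
    (hg2 : ∫ x in Ioi (0 : ℝ), (g x) ^ 2 ≤ G ^ 2)
    (hg2i : IntegrableOn (fun x => (g x) ^ 2) (Ioi (0 : ℝ)))
    (hw : ContDiff ℝ 2 w)
    (hode : ∀ x ∈ Icc 0 L, deriv (deriv w) x = g x - K x * w x)
    (hw'0 : deriv w 0 = 0) (hw0 : w 0 = α)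
    (hδ : 2 * (L / l) * L * 𝒦 ≤ 1) :
    ∀ x ∈ Icc 0 L, |w x| ≤ 2 ^ l * |α| + (2 ^ l - 1) * (2 * (L / l) * Real.sqrt L * G) :=
  stmt_6_general g K w 𝒦 G L α l hl hL hG hgc hKb hg2 hg2i hw hode hw'0 hw0 hδ
end

section
/- Let θ ∈ (0, θ₀] and suppose u(·,t) : ℝ → [0,∞) is C², symmetric decreasing, with u, u_x, u_t ∈ L²(ℝ) appropriately, u(R,t) = θ at R = R_θ(t) := sup{x : u(x,t) ≥ θ}, u(x,t) ≤ θ₀ for x ≥ R, and u_t = u_{xx} on {x ≥ R} (since f vanishes on [0,θ₀]). Assume u_x(x,t), u(x,t) → 0 as x → ∞. Then (1/2) u_x(R,t)² ≤ ( θ₀ · sup_x |u_x(x,t)| · ∫_ℝ u_t(x,t)² dx )^{1/2}. -/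
/-! Multiplying `u_t = u_xx` by `u_x` and integrating over `(R, ∞)` gives
`(1/2) u_x(R)² = -∫_R^∞ u_x u_t`, which Cauchy–Schwarz bounds by
`(∫_R^∞ u_x²)^{1/2} (∫ u_t²)^{1/2}`. Since `u` decreases from `θ` to `0` on `(R, ∞)`,
`u_x² ≤ sup |u_x| · (-u_x)` there, so `∫_R^∞ u_x² ≤ sup |u_x| · θ ≤ θ₀ · sup |u_x|`. -/

open Set MeasureTheory Filter Topology

open scoped RealInnerProductSpace in
theorem sq_integral_mul_le_integral_sq_mul_integral_sq {α : Type*} [MeasurableSpace α]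
    {μ : Measure α} {f g : α → ℝ} (hf : MemLp f 2 μ) (hg : MemLp g 2 μ) :
    (∫ a, f a * g a ∂μ) ^ 2 ≤ (∫ a, f a ^ 2 ∂μ) * ∫ a, g a ^ 2 ∂μ := by
  have inner_toLp {φ ψ : α → ℝ} (hφ : MemLp φ 2 μ) (hψ : MemLp ψ 2 μ) :
      ⟪hφ.toLp φ, hψ.toLp ψ⟫ = ∫ a, φ a * ψ a ∂μ := by
    rw [L2.inner_def]
    refine integral_congr_ae ?_
    filter_upwards [hφ.coeFn_toLp, hψ.coeFn_toLp] with a hφa hψa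
    simp [hφa, hψa, mul_comm]
  have := real_inner_mul_inner_self_le (hf.toLp f) (hg.toLp g)
  simpa only [inner_toLp, ← sq] using this

section HalfLine

variable {a : ℝ}

theorem integral_Ioi_mul_deriv_eq_neg_sq_div_two {v v' : ℝ → ℝ}
    (hv : ∀ x ∈ Ici a, HasDerivAt v (v' x) x)
    (hint : IntegrableOn (fun x => v x * v' x) (Ioi a)) (hlim : Tendsto v atTop (𝓝 0)) :
    ∫ x in Ioi a, v x * v' x = -(v a ^ 2 / 2) := by
  have hsq : ∀ x ∈ Ici a, HasDerivAt (fun y => v y ^ 2 / 2) (v x * v' x) x := fun x hx =>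
    (((hv x hx).fun_pow 2).div_const 2).congr_deriv (by norm_num; ring)
  have hlim_sq : Tendsto (fun y => v y ^ 2 / 2) atTop (𝓝 0) := by
    simpa using (hlim.pow 2).div_const 2
  rw [integral_Ioi_of_hasDerivAt_of_tendsto' hsq hint hlim_sq, zero_sub]

theorem sq_div_two_sq_le_integral_Ioi_sq_mul_integral_Ioi_sq {v v' : ℝ → ℝ}
    (hv : ∀ x ∈ Ici a, HasDerivAt v (v' x) x) (hvL2 : MemLp v 2 (volume.restrict (Ioi a)))
    (hv'L2 : MemLp v' 2 (volume.restrict (Ioi a))) (hlim : Tendsto v atTop (𝓝 0)) :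
    (v a ^ 2 / 2) ^ 2 ≤ (∫ x in Ioi a, v x ^ 2) * ∫ x in Ioi a, v' x ^ 2 := by
  have henergy := integral_Ioi_mul_deriv_eq_neg_sq_div_two hv (hvL2.integrable_mul hv'L2) hlim
  simpa only [henergy, neg_sq] using sq_integral_mul_le_integral_sq_mul_integral_sq hvL2 hv'L2

variable {u : ℝ → ℝ} {M : ℝ}

theorem AntitoneOn.deriv_nonpos_of_mem_Ioi (hanti : AntitoneOn u (Ici a)) {x : ℝ}
    (hx : x ∈ Ioi a) : deriv u x ≤ 0 := by
  rw [← derivWithin_of_mem_nhds (Ici_mem_nhds hx)]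
  exact hanti.derivWithin_nonpos

theorem deriv_sq_le_mul_neg_deriv (hanti : AntitoneOn u (Ici a))
    (hM : ∀ x ∈ Ioi a, |deriv u x| ≤ M) {x : ℝ} (hx : x ∈ Ioi a) :
    deriv u x ^ 2 ≤ M * -deriv u x := by
  have hneg := hanti.deriv_nonpos_of_mem_Ioi hx
  calc deriv u x ^ 2 = |deriv u x| * -deriv u x := by rw [abs_of_nonpos hneg]; ring
    _ ≤ M * -deriv u x := mul_le_mul_of_nonneg_right (hM x hx) (neg_nonneg.mpr hneg)

theorem integrableOn_Ioi_deriv_of_antitoneOn (hd : ∀ x ∈ Ici a, DifferentiableAt ℝ u x)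
    (hanti : AntitoneOn u (Ici a)) (hlim : Tendsto u atTop (𝓝 0)) :
    IntegrableOn (deriv u) (Ioi a) :=
  integrableOn_Ioi_deriv_of_nonpos' (fun x hx => (hd x hx).hasDerivAt)
    (fun _ hx => hanti.deriv_nonpos_of_mem_Ioi hx) hlim

theorem integrableOn_Ioi_deriv_sq_of_antitoneOn (hd : ∀ x ∈ Ici a, DifferentiableAt ℝ u x)
    (hanti : AntitoneOn u (Ici a)) (hM : ∀ x ∈ Ioi a, |deriv u x| ≤ M)
    (hlim : Tendsto u atTop (𝓝 0)) : IntegrableOn (fun x => deriv u x ^ 2) (Ioi a) := by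
  refine ((integrableOn_Ioi_deriv_of_antitoneOn hd hanti hlim).neg.const_mul M).mono'
    ((measurable_deriv u).pow_const 2).aestronglyMeasurable ?_
  refine (ae_restrict_iff' measurableSet_Ioi).mpr (Eventually.of_forall fun x hx => ?_)
  simpa using deriv_sq_le_mul_neg_deriv hanti hM hx

theorem integral_Ioi_deriv_sq_le_of_antitoneOn (hd : ∀ x ∈ Ici a, DifferentiableAt ℝ u x)
    (hanti : AntitoneOn u (Ici a)) (hM : ∀ x ∈ Ioi a, |deriv u x| ≤ M)
    (hlim : Tendsto u atTop (𝓝 0)) : ∫ x in Ioi a, deriv u x ^ 2 ≤ M * u a := by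
  have hint := integrableOn_Ioi_deriv_of_antitoneOn hd hanti hlim
  calc ∫ x in Ioi a, deriv u x ^ 2 ≤ ∫ x in Ioi a, M * -deriv u x :=
        setIntegral_mono_on (integrableOn_Ioi_deriv_sq_of_antitoneOn hd hanti hM hlim)
          (hint.neg.const_mul M) measurableSet_Ioi fun x hx => deriv_sq_le_mul_neg_deriv hanti hM hx
    _ = M * u a := by
      rw [integral_const_mul, integral_neg, integral_Ioi_of_hasDerivAt_of_tendsto'
        (fun x hx => (hd x hx).hasDerivAt) hint hlim]
      ring

end HalfLine

theorem stmt_17_general (u g : ℝ → ℝ) (R θ θ₀ M : ℝ)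
    (hθ₀ : θ ≤ θ₀) (hM : 0 ≤ M)
    (hu : ContDiff ℝ 2 u)
    (hdec : AntitoneOn u (Ici R))
    (huR : u R = θ)
    (hM' : ∀ x, |deriv u x| ≤ M)
    (hheat : ∀ x, R ≤ x → g x = deriv (deriv u) x)
    (htop : Tendsto u atTop (nhds 0))
    (htop' : Tendsto (deriv u) atTop (nhds 0))
    (hg2 : Integrable (fun x => (g x) ^ 2)) :
    (1 / 2) * (deriv u R) ^ 2 ≤ Real.sqrt (θ₀ * M * ∫ x : ℝ, (g x) ^ 2) := by
  have hud : Differentiable ℝ u := hu.differentiable (by norm_num)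
  have hu' : ContDiff ℝ 1 (deriv u) := hu.deriv' (n := 1)
  have hud' : ∀ x ∈ Ici R, HasDerivAt (deriv u) (g x) x := fun x hx =>
    hheat x hx ▸ (hu'.differentiable one_ne_zero x).hasDerivAt
  have hu'L2 : MemLp (deriv u) 2 (volume.restrict (Ioi R)) :=
    (memLp_two_iff_integrable_sq hu'.continuous.aestronglyMeasurable).mpr
      (integrableOn_Ioi_deriv_sq_of_antitoneOn (fun x _ => hud x) hdec (fun x _ => hM' x) htop)
  have hgL2 : MemLp g 2 (volume.restrict (Ioi R)) := by
    have hg_eq : deriv (deriv u) =ᵐ[volume.restrict (Ioi R)] g :=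
      (ae_restrict_iff' measurableSet_Ioi).mpr
        (Eventually.of_forall fun x hx => (hheat x (le_of_lt hx)).symm)
    exact (memLp_two_iff_integrable_sq
      ((hu'.continuous_deriv le_rfl).aestronglyMeasurable.congr hg_eq)).mpr hg2.integrableOn
  have hCS := sq_div_two_sq_le_integral_Ioi_sq_mul_integral_Ioi_sq hud' hu'L2 hgL2 htop'
  have hdu2 : ∫ x in Ioi R, deriv u x ^ 2 ≤ M * θ := huR ▸
    integral_Ioi_deriv_sq_le_of_antitoneOn (fun x _ => hud x) hdec (fun x _ => hM' x) htop
  have hg2R : ∫ x in Ioi R, g x ^ 2 ≤ ∫ x, g x ^ 2 :=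
    setIntegral_le_integral hg2 (Eventually.of_forall fun x => sq_nonneg (g x))
  have hθ_nonneg : 0 ≤ θ := huR ▸
    le_of_tendsto htop ((eventually_ge_atTop R).mono fun x hx => hdec self_mem_Ici hx hx)
  refine Real.le_sqrt_of_sq_le ?_
  calc (1 / 2 * deriv u R ^ 2) ^ 2 = (deriv u R ^ 2 / 2) ^ 2 := by ring
    _ ≤ (∫ x in Ioi R, deriv u x ^ 2) * ∫ x in Ioi R, g x ^ 2 := hCS
    _ ≤ (θ₀ * M) * ∫ x, g x ^ 2 := by
      gcongr ?_ * ?_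
      · exact mul_nonneg (hθ_nonneg.trans hθ₀) hM
      · exact hdu2.trans (by rw [mul_comm]; gcongr)

/-- Boundary-gradient estimate at the leading edge (ignition case): if `u` solves the
heat equation `g = u''` on `[R,∞)` (since `f` vanishes below `θ₀`), `u(R) = θ ≤ θ₀`,
`u` is nonincreasing on `[R,∞)` with `u, u' → 0` at `+∞` and `|u'| ≤ M`, then
`(1/2) u'(R)² ≤ √(θ₀ · M · ∫ g²)`. -/
theorem stmt_17 (u g : ℝ → ℝ) (R θ θ₀ M : ℝ)
    (hθ : 0 < θ) (hθ₀ : θ ≤ θ₀) (hM : 0 ≤ M)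
    (hu : ContDiff ℝ 2 u)
    (hpos : ∀ x, 0 ≤ u x)
    (hdec : AntitoneOn u (Ici R))
    (huR : u R = θ)
    (hub : ∀ x, R ≤ x → u x ≤ θ₀)
    (hM' : ∀ x, |deriv u x| ≤ M)
    (hheat : ∀ x, R ≤ x → g x = deriv (deriv u) x)
    (htop : Tendsto u atTop (nhds 0))
    (htop' : Tendsto (deriv u) atTop (nhds 0))
    (hg2 : Integrable (fun x => (g x) ^ 2))
    (hi1 : IntegrableOn (fun x => deriv u x * g x) (Ici R))
    (hi2 : IntegrableOn (fun x => (deriv u x) ^ 2) (Ici R)) :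
    (1 / 2) * (deriv u R) ^ 2 ≤ Real.sqrt (θ₀ * M * ∫ x : ℝ, (g x) ^ 2) :=
  stmt_17_general u g R θ θ₀ M hθ₀ hM hu hdec huR hM' hheat htop htop' hg2
end
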